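/- Let G = PSL_n(q), n ≥ 2, r a prime dividing gcd(n,q-1), and suppose r divides (q-1)/gcd(n,q-1). Then the nonsplit central extension Z_r.G (the quotient of SL_n(q) by the index-r subgroup of its center) does not embed into the permutation wreath product Z_r ≀ G (with respect to the action on P^(n-1)(q)) as a subextension over the trivial submodule. -/

import Mathlib

open scoped Pointwise

open Matrix Projectivization
open scoped LinearAlgebra.Projectivization

variable {n : ℕ} {F : Type*} [Field F]

/-- The action of `SL_n(F)` on the projective space `ℙ^{n-1}(F)`. -/
noncomputable instance slAction :
    MulAction (SpecialLinearGroup (Fin n) F) (ℙ F (Fin n → F)) where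
  smul g v := Projectivization.map (SpecialLinearGroup.toLin' g).toLinearMap
    (SpecialLinearGroup.toLin' g).injective v
  one_smul v := by
    induction v using Projectivization.ind with
    | h v hv =>
      show Projectivization.map _ _ _ = _
      rw [Projectivization.map_mk]
      simp
  mul_smul g h v := by
    induction v using Projectivization.ind with
    | h v hv =>
      show Projectivization.map _ _ _ = Projectivization.map _ _ (Projectivization.map _ _ _)
      rw [Projectivization.map_mk, Projectivization.map_mk, Projectivization.map_mk]
      simp

theorem sl_smul_mk (g : SpecialLinearGroup (Fin n) F) (v : Fin n → F) (hv : v ≠ 0) :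
    g • Projectivization.mk F v hv =
      Projectivization.mk F (SpecialLinearGroup.toLin' g v)
        ((SpecialLinearGroup.toLin' g).map_ne_zero_iff.2 hv) := by
  rfl

theorem center_acts_trivially (g : SpecialLinearGroup (Fin n) F)
    (hg : g ∈ Subgroup.center (SpecialLinearGroup (Fin n) F)) (v : ℙ F (Fin n → F)) :
    g • v = v := by
  induction v using Projectivization.ind with
  | h v hv =>
    obtain ⟨r, hr, hgr⟩ := Matrix.SpecialLinearGroup.mem_center_iff.mp hg
    simp only [Fintype.card_fin] at hr
    rcases Nat.eq_zero_or_pos n with hn | hn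
    · subst hn
      exact absurd (funext fun i => i.elim0) hv
    have hru : r ≠ 0 := fun h0 => by
      rw [h0, zero_pow (by omega)] at hr
      exact zero_ne_one hr
    rw [sl_smul_mk, mk_eq_mk_iff']
    refine ⟨r, ?_⟩
    rw [SpecialLinearGroup.toLin'_apply, ← hgr]
    funext i
    simp [Matrix.toLin'_apply, Matrix.mulVec_diagonal, Matrix.scalar_apply]

/-- The action of `PSL_n(F)` on the projective space `ℙ^{n-1}(F)`. -/
noncomputable instance pslAction :
    MulAction (ProjectiveSpecialLinearGroup (Fin n) F) (ℙ F (Fin n → F)) :=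
  MulAction.compHom _ <|
    QuotientGroup.lift (Subgroup.center (SpecialLinearGroup (Fin n) F))
      (MulAction.toPermHom (SpecialLinearGroup (Fin n) F) (ℙ F (Fin n → F)))
      (fun g hg => Equiv.ext fun v => center_acts_trivially g hg v)

theorem psl_smul (g : SpecialLinearGroup (Fin n) F) (v : ℙ F (Fin n → F)) :
    (QuotientGroup.mk g : ProjectiveSpecialLinearGroup (Fin n) F) • v = g • v := rfl
variable {G X : Type*} [Group G] [MulAction G X] (p : ℕ)

/-- The action of `G` on the permutation module `X → ZMod p` (written multiplicatively
so that it can serve as the kernel of a semidirect product). -/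
def permAut : G →* MulAut (Multiplicative (X → ZMod p)) where
  toFun g :=
    { toFun := fun v => Multiplicative.ofAdd (fun x => Multiplicative.toAdd v (g⁻¹ • x))
      invFun := fun v => Multiplicative.ofAdd (fun x => Multiplicative.toAdd v (g • x))
      left_inv := fun v => by
        apply Multiplicative.toAdd.injective
        funext x
        simp
      right_inv := fun v => by
        apply Multiplicative.toAdd.injective
        funext x
        simp
      map_mul' := fun v w => rfl }
  map_one' := by
    apply MulEquiv.ext
    intro v
    apply Multiplicative.toAdd.injective
    funext x
    simp
  map_mul' := fun g h => by
    apply MulEquiv.ext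
    intro v
    apply Multiplicative.toAdd.injective
    funext x
    simp [mul_smul]

/-- The permutation wreath product `ℤ_p ≀ G` for the action of `G` on `X`. -/
abbrev WreathProd (G X : Type*) [Group G] [MulAction G X] (p : ℕ) :=
  SemidirectProduct (Multiplicative (X → ZMod p)) G (permAut p)

/-- The diagonal embedding of `ZMod p` into the permutation module. -/
def constHom (X : Type*) (p : ℕ) :
    Multiplicative (ZMod p) →* Multiplicative (X → ZMod p) where
  toFun c := Multiplicative.ofAdd (fun _ => Multiplicative.toAdd c)
  map_one' := rfl
  map_mul' _ _ := rfl

/-!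
In `SL_n(q)` the matrix `A = diag(a^(1-n), a, …, a)` fixes the point `[e₀]` of `ℙ^{n-1}(q)`, and
`A^r` is the scalar `a^r` whenever that scalar is central. Since `gcd(n, q-1) * r ∣ q - 1`, every
`n`-th root of unity of `𝔽_q` is an `r`-th power, so `A^r` can be any central element, in
particular one outside `Z₀`. Its image `s` in `S = SL_n(q)/Z₀` thus has `s^r ≠ 1`, while the image
`g` of `s` in `G` has `g^r = 1` and fixes a point `x`. But in a subextension of `ℤ_r ≀ G` over the
constants, an element `w` over such a `g` has `w^r` constant, with value `r • w(x) = 0` at `x`;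
hence `w^r = 1`.
-/

namespace WreathProd

variable {p} {S : Subgroup (WreathProd G X p)}

theorem toAdd_pow_left_of_smul_eq (w : WreathProd G X p) {x : X} (hx : w.right • x = x)
    (k : ℕ) : Multiplicative.toAdd (w ^ k).left x = k • Multiplicative.toAdd w.left x := by
  induction k with
  | zero => simp
  | succ k ih =>
    have hx' : w.right⁻¹ • x = x := by rw [inv_smul_eq_iff, hx]
    have hleft : Multiplicative.toAdd (w ^ (k + 1)).left x
        = Multiplicative.toAdd w.left x + Multiplicative.toAdd (w ^ k).left (w.right⁻¹ • x) := by
      rw [pow_succ']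
      rfl
    rw [hleft, hx', ih, succ_nsmul']

theorem pow_eq_one_of_mem_of_smul_eq
    (hS : S ⊓ SemidirectProduct.inl.range = (SemidirectProduct.inl.comp (constHom X p)).range)
    {w : WreathProd G X p} (hw : w ∈ S) (hpow : w.right ^ p = 1) {x : X}
    (hx : w.right • x = x) : w ^ p = 1 := by
  have hmem : w ^ p ∈ S ⊓ SemidirectProduct.inl.range := by
    refine ⟨pow_mem hw p, ?_⟩
    rw [SemidirectProduct.range_inl_eq_ker_rightHom]
    exact MonoidHom.mem_ker.2 (by rw [map_pow]; exact hpow)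
  rw [hS] at hmem
  obtain ⟨c, hc⟩ := hmem
  have hc1 : c = 1 := by
    calc c = Multiplicative.ofAdd (Multiplicative.toAdd (w ^ p).left x) := by rw [← hc]; rfl
      _ = 1 := by
        rw [toAdd_pow_left_of_smul_eq w hx, nsmul_eq_mul, ZMod.natCast_self, zero_mul, ofAdd_zero]
  rw [← hc, hc1, map_one]

theorem pow_eq_one_of_mulEquiv_of_smul_eq {E : Type*} [Group E]
    (hS : S ⊓ SemidirectProduct.inl.range = (SemidirectProduct.inl.comp (constHom X p)).range)
    (θ : E ≃* S) {e : E} {x : X} (hpow : SemidirectProduct.rightHom (θ e).1 ^ p = 1)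
    (hx : SemidirectProduct.rightHom (θ e).1 • x = x) : e ^ p = 1 := by
  refine θ.injective (Subtype.ext ?_)
  rw [map_pow, map_one, Subgroup.coe_pow, OneMemClass.coe_one]
  exact pow_eq_one_of_mem_of_smul_eq hS (θ e).2 hpow hx

end WreathProd

theorem IsCyclic.exists_pow_eq_of_pow_eq_one {C : Type*} [Group C] [Finite C] [IsCyclic C]
    {d r : ℕ} (h : d * r ∣ Nat.card C) {x : C} (hx : x ^ d = 1) : ∃ y : C, y ^ r = x := by
  obtain ⟨g, hg⟩ := IsCyclic.exists_generator (α := C)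
  obtain ⟨k, rfl⟩ : x ∈ Submonoid.powers g := (mem_powers_iff_mem_zpowers).2 (hg x)
  have hd : 0 < d := Nat.pos_of_ne_zero fun hd => Nat.card_pos.ne' (by simpa [hd] using h)
  have hdk : d * r ∣ d * k := by
    refine h.trans ?_
    rw [← orderOf_eq_card_of_forall_mem_zpowers hg]
    exact orderOf_dvd_of_pow_eq_one (by rw [mul_comm, pow_mul]; exact hx)
  obtain ⟨j, rfl⟩ := Nat.dvd_of_mul_dvd_mul_left hd hdk
  exact ⟨g ^ j, by rw [← pow_mul, mul_comm]⟩

theorem FiniteField.exists_pow_eq_of_pow_eq_one {K : Type*} [Field K] [Fintype K] {n r : ℕ}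
    (hr : n.gcd (Fintype.card K - 1) * r ∣ Fintype.card K - 1) {u : Kˣ} (hu : u ^ n = 1) :
    ∃ a : Kˣ, a ^ r = u := by
  have hcard : Nat.card Kˣ = Fintype.card K - 1 := by
    rw [Nat.card_units, Nat.card_eq_fintype_card]
  have hgcd : u ^ n.gcd (Fintype.card K - 1) = 1 :=
    pow_gcd_eq_one.2 ⟨hu, by rw [← hcard]; exact pow_card_eq_one'⟩
  exact IsCyclic.exists_pow_eq_of_pow_eq_one (hcard ▸ hr) hgcd

namespace Matrix.SpecialLinearGroup

/-- `diag(a, …, a)` with the entry at `i` replaced by `a^(1-n)`, so that the determinant is `1`. -/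
def twistedScalar (i : Fin n) (a : Fˣ) : SpecialLinearGroup (Fin n) F :=
  ⟨diagonal fun j => ((a * (Pi.mulSingle i (a ^ n)⁻¹ : Fin n → Fˣ) j : Fˣ) : F), by
    rw [det_diagonal, ← Units.coe_prod, Finset.prod_mul_distrib, Finset.prod_const,
      Finset.card_univ, Fintype.card_fin, Fintype.prod_pi_mulSingle', mul_inv_cancel,
      Units.val_one]⟩

theorem coe_twistedScalar_pow (i : Fin n) (a : Fˣ) {k : ℕ} (hk : (a ^ k) ^ n = 1) :
    ((twistedScalar i a ^ k : SpecialLinearGroup (Fin n) F) : Matrix (Fin n) (Fin n) F) =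
      scalar (Fin n) ((a ^ k : Fˣ) : F) := by
  rw [coe_pow, twistedScalar, coe_mk, diagonal_pow, scalar_apply]
  congr 1
  funext j
  have hsingle : (Pi.mulSingle i (a ^ n)⁻¹ : Fin n → Fˣ) j ^ k = 1 := by
    rw [← Pi.pow_apply, ← Pi.mulSingle_pow, inv_pow, ← pow_mul, mul_comm n k, pow_mul, hk,
      inv_one, Pi.mulSingle_one, Pi.one_apply]
  rw [Pi.pow_apply, ← Units.val_pow_eq_pow_val, mul_pow, hsingle, mul_one]

theorem twistedScalar_smul_mk_single (i : Fin n) (a : Fˣ)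
    (h : (Pi.single i 1 : Fin n → F) ≠ 0) :
    twistedScalar i a • Projectivization.mk F (Pi.single i 1) h =
      Projectivization.mk F (Pi.single i 1) h := by
  rw [sl_smul_mk, mk_eq_mk_iff']
  refine ⟨((a * (Pi.mulSingle i (a ^ n)⁻¹ : Fin n → Fˣ) i : Fˣ) : F), ?_⟩
  rw [toLin'_apply, Matrix.toLin'_apply, twistedScalar, coe_mk, diagonal_mulVec_single, mul_one,
    ← Pi.single_smul', smul_eq_mul, mul_one]

theorem exists_pow_eq_smul_eq_of_mem_center [Fintype F] (hn : n ≠ 0) {r : ℕ}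
    (hr : n.gcd (Fintype.card F - 1) * r ∣ Fintype.card F - 1)
    {z : SpecialLinearGroup (Fin n) F} (hz : z ∈ Subgroup.center (SpecialLinearGroup (Fin n) F)) :
    ∃ A : SpecialLinearGroup (Fin n) F, A ^ r = z ∧ ∃ x : ℙ F (Fin n → F), A • x = x := by
  obtain ⟨c, hc, hcz⟩ := mem_center_iff.mp hz
  rw [Fintype.card_fin] at hc
  have hc0 : c ≠ 0 := by
    rintro rfl
    exact zero_ne_one ((zero_pow hn).symm.trans hc)
  have hu : Units.mk0 c hc0 ^ n = 1 := by
    ext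
    rw [Units.val_pow_eq_pow_val, Units.val_mk0, hc, Units.val_one]
  obtain ⟨a, ha⟩ := FiniteField.exists_pow_eq_of_pow_eq_one hr hu
  let i : Fin n := ⟨0, Nat.pos_of_ne_zero hn⟩
  have hi : (Pi.single i 1 : Fin n → F) ≠ 0 := by simp
  refine ⟨twistedScalar i a, Subtype.ext ?_, _, twistedScalar_smul_mk_single i a hi⟩
  rw [coe_twistedScalar_pow i a (ha ▸ hu), ha, Units.val_mk0, hcz]

end Matrix.SpecialLinearGroup

theorem stmt_15_general (n : ℕ) (hn : 2 ≤ n) (F : Type) [Field F] [Fintype F]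
    (r : ℕ) [Fact r.Prime]
    (h2 : r ∣ (Fintype.card F - 1) / Nat.gcd n (Fintype.card F - 1))
    (Z₀ : Subgroup (SpecialLinearGroup (Fin n) F)) [Z₀.Normal]
    (hZ₀ : Z₀ ≤ Subgroup.center (SpecialLinearGroup (Fin n) F))
    (hZ₀idx : Z₀.relIndex (Subgroup.center (SpecialLinearGroup (Fin n) F)) = r) :
    ¬ ∃ S' : Subgroup (WreathProd (ProjectiveSpecialLinearGroup (Fin n) F)
        (ℙ F (Fin n → F)) r),
      S' ⊓ (SemidirectProduct.inl : Multiplicative (ℙ F (Fin n → F) → ZMod r) →*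
          WreathProd (ProjectiveSpecialLinearGroup (Fin n) F) (ℙ F (Fin n → F)) r).range =
        (SemidirectProduct.inl.comp (constHom (ℙ F (Fin n → F)) r)).range ∧
      (S' : Set (WreathProd (ProjectiveSpecialLinearGroup (Fin n) F) (ℙ F (Fin n → F)) r)) *
        ((SemidirectProduct.inl : Multiplicative (ℙ F (Fin n → F) → ZMod r) →*
          WreathProd (ProjectiveSpecialLinearGroup (Fin n) F) (ℙ F (Fin n → F)) r).range :
          Set (WreathProd (ProjectiveSpecialLinearGroup (Fin n) F) (ℙ F (Fin n → F)) r)) =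
        Set.univ ∧
      ∃ θ : (SpecialLinearGroup (Fin n) F ⧸ Z₀) ≃* S',
        ∀ w : SpecialLinearGroup (Fin n) F ⧸ Z₀,
          SemidirectProduct.rightHom ((θ w : WreathProd
              (ProjectiveSpecialLinearGroup (Fin n) F) (ℙ F (Fin n → F)) r)) =
            QuotientGroup.map Z₀ (Subgroup.center (SpecialLinearGroup (Fin n) F))
              (MonoidHom.id _) hZ₀ w := by
  rintro ⟨S', hS', -, θ, hθ⟩
  obtain ⟨z, hz, hzZ₀⟩ := SetLike.not_le_iff_exists.1 fun hle =>
    (Fact.out : r.Prime).one_lt.ne' (hZ₀idx ▸ Subgroup.relIndex_eq_one.2 hle)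
  have hr : n.gcd (Fintype.card F - 1) * r ∣ Fintype.card F - 1 :=
    Nat.mul_dvd_of_dvd_div (Nat.gcd_dvd_right _ _) h2
  obtain ⟨A, rfl, x, hx⟩ :=
    Matrix.SpecialLinearGroup.exists_pow_eq_smul_eq_of_mem_center (by omega) hr hz
  have hθA : SemidirectProduct.rightHom (θ A).1 =
      (A : ProjectiveSpecialLinearGroup (Fin n) F) := by
    rw [hθ]; rfl
  apply hzZ₀
  rw [← QuotientGroup.eq_one_iff, QuotientGroup.mk_pow]
  refine WreathProd.pow_eq_one_of_mulEquiv_of_smul_eq hS' θ (x := x) ?_ (by rw [hθA]; exact hx)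
  rw [hθA, ← QuotientGroup.mk_pow, QuotientGroup.eq_one_iff]
  exact hz

/-- Let `G = PSL_n(q)`, `r` a prime dividing `gcd(n,q-1)`, and
suppose `r ∣ (q-1)/gcd(n,q-1)`. Then the nonsplit central extension
`S = SL_n(q)/Z₀` (`Z₀` of index `r` in the center) does not embed into the
permutation wreath product `ℤ_r ≀ G` for the action on `ℙ^{n-1}(q)` as a
subextension over the trivial submodule `I`. -/
theorem stmt_15 (n : ℕ) (hn : 2 ≤ n) (F : Type) [Field F] [Fintype F]
    (r : ℕ) [Fact r.Prime]
    (h1 : r ∣ Nat.gcd n (Fintype.card F - 1))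
    (h2 : r ∣ (Fintype.card F - 1) / Nat.gcd n (Fintype.card F - 1))
    (Z₀ : Subgroup (SpecialLinearGroup (Fin n) F)) [Z₀.Normal]
    (hZ₀ : Z₀ ≤ Subgroup.center (SpecialLinearGroup (Fin n) F))
    (hZ₀idx : Z₀.relIndex (Subgroup.center (SpecialLinearGroup (Fin n) F)) = r) :
    ¬ ∃ S' : Subgroup (WreathProd (ProjectiveSpecialLinearGroup (Fin n) F)
        (ℙ F (Fin n → F)) r),
      S' ⊓ (SemidirectProduct.inl : Multiplicative (ℙ F (Fin n → F) → ZMod r) →*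
          WreathProd (ProjectiveSpecialLinearGroup (Fin n) F) (ℙ F (Fin n → F)) r).range =
        (SemidirectProduct.inl.comp (constHom (ℙ F (Fin n → F)) r)).range ∧
      (S' : Set (WreathProd (ProjectiveSpecialLinearGroup (Fin n) F) (ℙ F (Fin n → F)) r)) *
        ((SemidirectProduct.inl : Multiplicative (ℙ F (Fin n → F) → ZMod r) →*
          WreathProd (ProjectiveSpecialLinearGroup (Fin n) F) (ℙ F (Fin n → F)) r).range :
          Set (WreathProd (ProjectiveSpecialLinearGroup (Fin n) F) (ℙ F (Fin n → F)) r)) =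
        Set.univ ∧
      ∃ θ : (SpecialLinearGroup (Fin n) F ⧸ Z₀) ≃* S',
        ∀ w : SpecialLinearGroup (Fin n) F ⧸ Z₀,
          SemidirectProduct.rightHom ((θ w : WreathProd
              (ProjectiveSpecialLinearGroup (Fin n) F) (ℙ F (Fin n → F)) r)) =
            QuotientGroup.map Z₀ (Subgroup.center (SpecialLinearGroup (Fin n) F))
              (MonoidHom.id _) hZ₀ w :=
  stmt_15_general n hn F r h2 Z₀ hZ₀ hZ₀idx
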